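/- Let G = Z/2Z act on a smooth projective curve C of genus g ≥ 2 over a field of characteristic ≠ 2 via the hyperelliptic involution. Then there is no surjective map of sheaves (on the Nisnevich site of smooth k-schemes) from the constant sheaf Z/2Z onto the sheaf represented by C. -/

import Mathlib

/-!
Common setup: schemes, the affine line over a scheme, projective space over a
field, smooth projective curves, and an interface (`BundleTheory`) axiomatizing
the theory of vector bundles (finite locally free sheaves) on schemes together
with the standard operations (pullback, direct sum, tensor product, dual,
determinant, rank, short exact sequences, global generation), which is not yet
available in Mathlib.  `𝔸¹`-concordance is then defined exactly as in the
paper, using the genuine scheme `X × 𝔸¹` and the inclusions at `0` and `1`.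
-/

open AlgebraicGeometry CategoryTheory CategoryTheory.Limits

noncomputable section

/-- `Spec k` for a field `k`. -/
def SpecK (k : Type) [Field k] : Scheme := Spec (CommRingCat.of k)

/-- The affine line `X × 𝔸¹` over a scheme `X`. -/
def AffLine (X : Scheme) : Scheme := 𝔸(PUnit.{1}; X)

/-- The projection `X × 𝔸¹ ⟶ X`. -/
def AffLine.proj (X : Scheme) : AffLine X ⟶ X := 𝔸(PUnit.{1}; X) ↘ X

/-- The inclusion `i₀ : X ⟶ X × 𝔸¹` at the point `0`. -/
def i0 (X : Scheme) : X ⟶ AffLine X := AffineSpace.homOfVector (𝟙 X) 0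

/-- The inclusion `i₁ : X ⟶ X × 𝔸¹` at the point `1`. -/
def i1 (X : Scheme) : X ⟶ AffLine X := AffineSpace.homOfVector (𝟙 X) 1

open MvPolynomial in
/-- Projective `n`-space over a field `k`, as `Proj` of the polynomial ring in
`n+1` variables with its standard grading. -/
def ProjSpace (k : Type) [Field k] (n : ℕ) : Scheme :=
  letI := MvPolynomial.gradedAlgebra (σ := Fin (n+1)) (R := k)
  Proj (homogeneousSubmodule (Fin (n+1)) k)

/-- A scheme is normal if all of its local rings are integrally closed domains. -/
def NormalScheme (X : Scheme) : Prop :=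
  ∀ x : X, ∀ [IsDomain (X.presheaf.stalk x)], IsIntegrallyClosed (X.presheaf.stalk x)

/-- `X` together with the structure morphism `f : X ⟶ Spec k` is a normal
variety over `k`: integral, of finite type over `k`, and normal. -/
def IsNormalVariety (k : Type) [Field k] {X : Scheme} (f : X ⟶ SpecK k) : Prop :=
  IsIntegral X ∧ LocallyOfFiniteType f ∧ QuasiCompact f ∧ NormalScheme X

/-- `X ⟶ Spec k` is a projective scheme over `k`: proper over `k` and admitting
a closed immersion into some projective space over `k`. -/
def IsProjectiveOver (k : Type) [Field k] {X : Scheme} (f : X ⟶ SpecK k) : Prop :=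
  IsProper f ∧ ∃ (n : ℕ) (i : X ⟶ ProjSpace k n), IsClosedImmersion i

/-- `C ⟶ Spec k` is a smooth projective curve over `k`. -/
def IsSmoothProjectiveCurve (k : Type) [Field k] {C : Scheme} (f : C ⟶ SpecK k) : Prop :=
  IsIntegral C ∧ IsSmoothOfRelativeDimension 1 f ∧ IsProjectiveOver k f

/-- An interface axiomatizing vector bundles (= finite locally free sheaves) on
schemes, with the operations and basic compatibilities used in the paper. -/
structure BundleTheory.{u_1} where
  /-- the collection of vector bundles on a scheme `X` -/
  VB : Scheme.{u_1} → Type 1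
  /-- isomorphism of vector bundles -/
  iso : {X : Scheme} → VB X → VB X → Prop
  iso_refl : ∀ {X} (E : VB X), iso E E
  iso_symm : ∀ {X} {E F : VB X}, iso E F → iso F E
  iso_trans : ∀ {X} {E F G : VB X}, iso E F → iso F G → iso E G
  /-- pullback of vector bundles along a morphism of schemes -/
  pull : {X Y : Scheme} → (X ⟶ Y) → VB Y → VB X
  pull_id : ∀ {X} (E : VB X), iso (pull (𝟙 X) E) E
  pull_comp : ∀ {X Y Z} (f : X ⟶ Y) (g : Y ⟶ Z) (E : VB Z),
    iso (pull f (pull g E)) (pull (f ≫ g) E)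
  pull_congr : ∀ {X Y} (f : X ⟶ Y) {E F : VB Y}, iso E F → iso (pull f E) (pull f F)
  /-- the rank of a vector bundle (on a connected scheme) -/
  rank : {X : Scheme} → VB X → ℕ
  rank_iso : ∀ {X} {E F : VB X}, iso E F → rank E = rank F
  rank_pull : ∀ {X Y} (f : X ⟶ Y) (E : VB Y), rank (pull f E) = rank E
  /-- direct sum of vector bundles -/
  sum : {X : Scheme} → VB X → VB X → VB X
  sum_congr : ∀ {X} {E E' F F' : VB X}, iso E E' → iso F F' → iso (sum E F) (sum E' F')
  sum_comm : ∀ {X} (E F : VB X), iso (sum E F) (sum F E)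
  sum_assoc : ∀ {X} (E F G : VB X), iso (sum (sum E F) G) (sum E (sum F G))
  rank_sum : ∀ {X} (E F : VB X), rank (sum E F) = rank E + rank F
  pull_sum : ∀ {X Y} (f : X ⟶ Y) (E F : VB Y),
    iso (pull f (sum E F)) (sum (pull f E) (pull f F))
  /-- tensor product of vector bundles -/
  tens : {X : Scheme} → VB X → VB X → VB X
  tens_congr : ∀ {X} {E E' F F' : VB X}, iso E E' → iso F F' → iso (tens E F) (tens E' F')
  tens_comm : ∀ {X} (E F : VB X), iso (tens E F) (tens F E)
  pull_tens : ∀ {X Y} (f : X ⟶ Y) (E F : VB Y),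
    iso (pull f (tens E F)) (tens (pull f E) (pull f F))
  /-- the trivial line bundle `𝒪_X` -/
  unit : (X : Scheme) → VB X
  rank_unit : ∀ X, rank (unit X) = 1
  pull_unit : ∀ {X Y} (f : X ⟶ Y), iso (pull f (unit Y)) (unit X)
  tens_unit : ∀ {X} (E : VB X), iso (tens E (unit X)) E
  /-- the dual of a vector bundle -/
  dual : {X : Scheme} → VB X → VB X
  dual_congr : ∀ {X} {E F : VB X}, iso E F → iso (dual E) (dual F)
  rank_dual : ∀ {X} (E : VB X), rank (dual E) = rank E
  tens_dual_self : ∀ {X} (L : VB X), rank L = 1 → iso (tens L (dual L)) (unit X)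
  /-- the determinant line bundle `⋀^{rank} E` -/
  det : {X : Scheme} → VB X → VB X
  det_congr : ∀ {X} {E F : VB X}, iso E F → iso (det E) (det F)
  rank_det : ∀ {X} (E : VB X), rank (det E) = 1
  det_line : ∀ {X} (L : VB X), rank L = 1 → iso (det L) L
  det_sum : ∀ {X} (E F : VB X), iso (det (sum E F)) (tens (det E) (det F))
  pull_det : ∀ {X Y} (f : X ⟶ Y) (E : VB Y), iso (pull f (det E)) (det (pull f E))
  /-- `ses E₀ E E₁` records a short exact sequence `0 → E₀ → E → E₁ → 0` -/
  ses : {X : Scheme} → VB X → VB X → VB X → Prop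
  ses_sum : ∀ {X} (E F : VB X), ses E (sum E F) F
  ses_rank : ∀ {X} {E₀ E E₁ : VB X}, ses E₀ E E₁ → rank E = rank E₀ + rank E₁
  ses_det : ∀ {X} {E₀ E E₁ : VB X}, ses E₀ E E₁ → iso (det E) (tens (det E₀) (det E₁))
  /-- global generation of a vector bundle -/
  globGen : {X : Scheme} → VB X → Prop
  /-- the zero bundle -/
  zero : (X : Scheme) → VB X
  rank_zero : ∀ X, rank (zero X) = 0
  sum_zero : ∀ {X} (E : VB X), iso (sum (zero X) E) E

namespace BundleTheory

variable (T : BundleTheory)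

/-- The trivial bundle `𝒪_X^n`. -/
def trivial (X : Scheme) : ℕ → T.VB X
  | 0 => T.zero X
  | n + 1 => T.sum (T.unit X) (trivial X n)

/-- `n`-th tensor power `L^{⊗n}` of a bundle. -/
def tpow {X : Scheme} (L : T.VB X) : ℕ → T.VB X
  | 0 => T.unit X
  | n + 1 => T.tens (tpow L n) L

/-- Two vector bundles `E₀`, `E₁` on `X` are *directly `𝔸¹`-concordant* if there
is a vector bundle `E` on `X × 𝔸¹` with `i₀*E ≅ E₀` and `i₁*E ≅ E₁`. -/
def DirectConc {X : Scheme} (E₀ E₁ : T.VB X) : Prop :=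
  ∃ E : T.VB (AffLine X), T.iso (T.pull (i0 X) E) E₀ ∧ T.iso (T.pull (i1 X) E) E₁

/-- `𝔸¹`-concordance: the equivalence relation generated by direct
`𝔸¹`-concordance. -/
def Conc {X : Scheme} : T.VB X → T.VB X → Prop :=
  Relation.EqvGen (T.DirectConc (X := X))

end BundleTheory

/-- A family `g i : U i ⟶ X` is a *Nisnevich cover* if each `g i` is étale and
every point of `X` lifts to some `U i` with trivial residue field
extension. -/
def IsNisnevichCover {ι : Type} {X : Scheme} (U : ι → Scheme)
    (g : ∀ i, U i ⟶ X) : Prop :=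
  (∀ i, IsEtale (g i)) ∧
    ∀ x : X, ∃ (i : ι) (u : U i), (g i).base u = x ∧ IsIso ((g i).residueFieldMap u)

/-!
Naturality of the sections of `ℤ/2` makes each of them over `C` invariant under precomposition
with the `k`-automorphism `σ`. Local surjectivity, applied to `𝟙 C`, makes one of them agree with
`𝟙 C` on an étale neighbourhood of the generic point; as `C` is reduced and separated over `k`, it
is then `𝟙 C` itself, and so `σ = 𝟙 C`.
-/

lemma isDominant_of_genericPoint_mem_range {X Y : Scheme} [IrreducibleSpace X] (g : Y ⟶ X)
    (h : genericPoint X ∈ Set.range g.base) : IsDominant g where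
  denseRange := dense_iff_closure_eq.2 <| Set.eq_univ_of_univ_subset <|
    genericPoint_closure X ▸ closure_mono (Set.singleton_subset_iff.2 h)

lemma IsNisnevichCover.exists_isDominant {ι : Type} {X : Scheme} [IrreducibleSpace X]
    {U : ι → Scheme} {g : ∀ i, U i ⟶ X} (hg : IsNisnevichCover U g) : ∃ i, IsDominant (g i) := by
  obtain ⟨i, u, hu, -⟩ := hg.2 (genericPoint X)
  exact ⟨i, isDominant_of_genericPoint_mem_range (g i) ⟨u, hu⟩⟩

theorem no_surjection_from_constant_sheaf_general {k : Type} [Field k]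
    {C : Scheme} (f : C ⟶ SpecK k)
    (hC : IsSmoothProjectiveCurve k f)
    (σ : C ⟶ C) (hσne : σ ≠ 𝟙 C) (hσf : σ ≫ f = f) :
    ¬ ∃ a : ∀ (Y : Scheme) (gY : Y ⟶ SpecK k), IsSmooth gY →
        LocallyOfFiniteType gY → ZMod 2 → (Y ⟶ C),
      -- the sections land in morphisms over `Spec k`
      (∀ Y gY h₁ h₂ ε, a Y gY h₁ h₂ ε ≫ f = gY) ∧
      -- naturality in `Y`
      (∀ Y gY h₁ h₂ Y' gY' h₁' h₂' (u : Y' ⟶ Y), u ≫ gY = gY' →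
        ∀ ε, a Y' gY' h₁' h₂' ε = u ≫ a Y gY h₁ h₂ ε) ∧
      -- local surjectivity for the Nisnevich topology
      (∀ Y (gY : Y ⟶ SpecK k) (h₁ : IsSmooth gY) (h₂ : LocallyOfFiniteType gY)
        (s : Y ⟶ C), s ≫ f = gY →
        ∃ (ι : Type) (U : ι → Scheme) (g : ∀ i, U i ⟶ Y),
          IsNisnevichCover U g ∧
          ∀ i, ∃ (hU₁ : IsSmooth (g i ≫ gY)) (hU₂ : LocallyOfFiniteType (g i ≫ gY))
            (ε : ZMod 2), a (U i) (g i ≫ gY) hU₁ hU₂ ε = g i ≫ s) := by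
  rintro ⟨a, hover, hnat, hsurj⟩
  obtain ⟨hint, hsm, hproper, -⟩ := hC
  have : SmoothOfRelativeDimension 1 f := hsm
  have h₁ : IsSmooth f := IsSmoothOfRelativeDimension.isSmooth 1 f
  have h₂ : LocallyOfFiniteType f := inferInstance
  obtain ⟨ι, U, g, hcov, hloc⟩ := hsurj C f h₁ h₂ (𝟙 C) (Category.id_comp f)
  obtain ⟨i, hi⟩ := hcov.exists_isDominant
  obtain ⟨hU₁, hU₂, ε, hε⟩ := hloc i
  have hid : a C f h₁ h₂ ε = 𝟙 C :=
    ext_of_isDominant_of_isSeparated f (by rw [hover, Category.id_comp]) (g i)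
      (by rw [← hnat C f h₁ h₂ (U i) _ hU₁ hU₂ (g i) rfl, hε])
  apply hσne
  simpa [hid] using (hnat C f h₁ h₂ C f h₁ h₂ σ hσf ε).symm

/-- Example 2.11 of the paper.  Let `C` be a smooth
projective hyperelliptic curve of genus `≥ 2` over a field `k` of
characteristic `≠ 2`, with hyperelliptic involution `σ` (a nontrivial
involution over the degree-two finite morphism `π : C ⟶ ℙ¹`; the genus
hypothesis is encoded by `C` not being rational).  Then there is no surjective
map of Nisnevich sheaves on smooth `k`-schemes from the constant sheaf `ℤ/2`
to the sheaf represented by `C`.  Concretely: there is no natural family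
`a Y gY _ _ : ℤ/2 → Hom_k(Y, C)` (a map of presheaves from `ℤ/2` to `h_C` on
the category of smooth `k`-schemes) which is locally surjective for the
Nisnevich topology. -/
theorem no_surjection_from_constant_sheaf {k : Type} [Field k]
    (hchar : ringChar k ≠ 2) {C : Scheme} (f : C ⟶ SpecK k)
    (hC : IsSmoothProjectiveCurve k f)
    (hgenus : ¬ Nonempty (C ≅ ProjSpace k 1))
    (σ : C ⟶ C) (hσ2 : σ ≫ σ = 𝟙 C) (hσne : σ ≠ 𝟙 C) (hσf : σ ≫ f = f)
    (π : C ⟶ ProjSpace k 1) [IsFinite π] (hπ : σ ≫ π = π) :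
    ¬ ∃ a : ∀ (Y : Scheme) (gY : Y ⟶ SpecK k), IsSmooth gY →
        LocallyOfFiniteType gY → ZMod 2 → (Y ⟶ C),
      -- the sections land in morphisms over `Spec k`
      (∀ Y gY h₁ h₂ ε, a Y gY h₁ h₂ ε ≫ f = gY) ∧
      -- naturality in `Y`
      (∀ Y gY h₁ h₂ Y' gY' h₁' h₂' (u : Y' ⟶ Y), u ≫ gY = gY' →
        ∀ ε, a Y' gY' h₁' h₂' ε = u ≫ a Y gY h₁ h₂ ε) ∧
      -- local surjectivity for the Nisnevich topology
      (∀ Y (gY : Y ⟶ SpecK k) (h₁ : IsSmooth gY) (h₂ : LocallyOfFiniteType gY)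
        (s : Y ⟶ C), s ≫ f = gY →
        ∃ (ι : Type) (U : ι → Scheme) (g : ∀ i, U i ⟶ Y),
          IsNisnevichCover U g ∧
          ∀ i, ∃ (hU₁ : IsSmooth (g i ≫ gY)) (hU₂ : LocallyOfFiniteType (g i ≫ gY))
            (ε : ZMod 2), a (U i) (g i ≫ gY) hU₁ hU₂ ε = g i ≫ s) :=
  no_surjection_from_constant_sheaf_general f hC σ hσne hσf
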